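/- Let (h⁺, h⁻) be a pair of homomorphism height functions on Λ⁺ agreeing on ∂Λ, with h⁺(v) = m + 2k and h⁻(v) = m - 2k for some vertex v ∈ Λ, integer m and positive integer k. Let Λ' be the largest connected subset of Λ⁺ containing v on which h⁺ > h⁻ + 2k. Then Λ' is disjoint from ∂Λ, and the functions h, h' defined by h = h⁺ - 2k on Λ', h = h⁻ off Λ', and h' = h⁻ + 2k on Λ', h' = h⁺ off Λ', are homomorphism height functions on Λ⁺ with h(v) = h'(v) = m. -/
import Mathlib


open MeasureTheory Filter
open scoped ENNReal Classical

noncomputable section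

def norm1 {d : ℕ} (v : Fin d → ℤ) : ℤ := ∑ i, |v i|

def Adj {d : ℕ} (u v : Fin d → ℤ) : Prop := norm1 (u - v) = 1

def IsHHF {d : ℕ} (f : (Fin d → ℤ) → ℤ) : Prop :=
  (∀ u v, Adj u v → |f u - f v| = 1) ∧ ∀ v, f v % 2 = norm1 v % 2

def IsHHFOn {d : ℕ} (S : Set (Fin d → ℤ)) (f : (Fin d → ℤ) → ℤ) : Prop :=
  (∀ u ∈ S, ∀ w ∈ S, Adj u w → |f u - f w| = 1) ∧ ∀ u ∈ S, f u % 2 = norm1 u % 2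

def connIn {d : ℕ} (S : Set (Fin d → ℤ)) (a b : Fin d → ℤ) : Prop :=
  Relation.ReflTransGen (fun x y => x ∈ S ∧ y ∈ S ∧ Adj x y) a b

def extBd {d : ℕ} (Λ : Finset (Fin d → ℤ)) : Set (Fin d → ℤ) :=
  {w | w ∉ Λ ∧ ∃ u ∈ Λ, Adj u w}

def lamPlus {d : ℕ} (Λ : Finset (Fin d → ℤ)) : Set (Fin d → ℤ) :=
  (↑Λ : Set (Fin d → ℤ)) ∪ extBd Λ

lemma adj_symm' {d : ℕ} {u w : Fin d → ℤ} (h : Adj u w) : Adj w u := by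
  unfold Adj norm1 at *
  rw [← h]
  exact Finset.sum_congr rfl fun i _ => by simp [abs_sub_comm]

theorem stmt7 {d : ℕ} (Λ : Finset (Fin d → ℤ))
    (hp hm : (Fin d → ℤ) → ℤ)
    (hhp : IsHHFOn (lamPlus Λ) hp) (hhm : IsHHFOn (lamPlus Λ) hm)
    (hagree : ∀ w ∈ extBd Λ, hp w = hm w)
    (v : Fin d → ℤ) (hv : v ∈ Λ)
    (m : ℤ) (k : ℕ) (hk : 0 < k)
    (hpv : hp v = m + 2 * k) (hmv : hm v = m - 2 * k) :
    let S : Set (Fin d → ℤ) := {u | u ∈ lamPlus Λ ∧ hm u + 2 * (k : ℤ) < hp u}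
    let Λ' : Set (Fin d → ℤ) := {u | u ∈ S ∧ connIn S v u}
    (Λ' ∩ extBd Λ = ∅) ∧
    IsHHFOn (lamPlus Λ) (fun u => if u ∈ Λ' then hp u - 2 * (k : ℤ) else hm u) ∧
    IsHHFOn (lamPlus Λ) (fun u => if u ∈ Λ' then hm u + 2 * (k : ℤ) else hp u) ∧
    (if v ∈ Λ' then hp v - 2 * (k : ℤ) else hm v) = m ∧
    (if v ∈ Λ' then hm v + 2 * (k : ℤ) else hp v) = m := by
  intro S Λ'
  have hkz : (0:ℤ) < (k:ℤ) := by exact_mod_cast hk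
  have hvS : v ∈ S := ⟨Or.inl hv, by rw [hpv, hmv]; omega⟩
  have hvΛ' : v ∈ Λ' := ⟨hvS, Relation.ReflTransGen.refl⟩
  have hSsub : ∀ u, u ∈ S → u ∈ lamPlus Λ := fun u hu => hu.1
  have hpar : ∀ u ∈ lamPlus Λ, hp u % 2 = hm u % 2 :=
    fun u hu => (hhp.2 u hu).trans (hhm.2 u hu).symm
  have hbd : ∀ u w, u ∈ Λ' → w ∈ lamPlus Λ → w ∉ Λ' → Adj u w →
      hp w = hm w + 2 * (k:ℤ) := by
    intro u w hu hw hnw ha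
    have huS := hu.1
    have hwS : w ∉ S := fun hwS => hnw ⟨hwS, hu.2.tail ⟨huS, hwS, ha⟩⟩
    have h1 : ¬ (hm w + 2 * (k:ℤ) < hp w) := fun h => hwS ⟨hw, h⟩
    have h2 : |hp u - hp w| = 1 := hhp.1 u (hSsub u huS) w hw ha
    have h3 : |hm u - hm w| = 1 := hhm.1 u (hSsub u huS) w hw ha
    have h4 := huS.2
    have h5 := hpar w hw
    rw [abs_eq (by norm_num : (0:ℤ) ≤ 1)] at h2 h3
    omega
  have hdisj : Λ' ∩ extBd Λ = ∅ := by
    ext u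
    simp only [Set.mem_inter_iff, Set.mem_empty_iff_false, iff_false, not_and]
    intro hu hb
    have := hagree u hb
    have := hu.1.2
    omega
  refine ⟨hdisj, ⟨?_, ?_⟩, ⟨?_, ?_⟩, ?_, ?_⟩
  · intro u hu w hw ha
    have hpe := hhp.1 u hu w hw ha
    have hme := hhm.1 u hu w hw ha
    rw [abs_eq (by norm_num : (0:ℤ) ≤ 1)] at hpe hme
    by_cases h1 : u ∈ Λ' <;> by_cases h2 : w ∈ Λ' <;>
      simp only [h1, h2, if_true, if_false] <;>
      rw [abs_eq (by norm_num : (0:ℤ) ≤ 1)]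
    · omega
    · have := hbd u w h1 hw h2 ha; omega
    · have := hbd w u h2 hu h1 (adj_symm' ha); omega
    · omega
  · intro u hu
    by_cases h1 : u ∈ Λ' <;> simp only [h1, if_true, if_false]
    · have := hhp.2 u hu; omega
    · exact hhm.2 u hu
  · intro u hu w hw ha
    by_cases h1 : u ∈ Λ' <;> by_cases h2 : w ∈ Λ' <;> simp only [h1, h2, if_true, if_false]
    · have := hhm.1 u hu w hw ha
      calc |hm u + 2 * (k:ℤ) - (hm w + 2 * (k:ℤ))| = |hm u - hm w| := by ring_nf
        _ = 1 := this
    · rw [hbd u w h1 hw h2 ha]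
      have := hhm.1 u hu w hw ha
      calc |hm u + 2 * (k:ℤ) - (hm w + 2 * (k:ℤ))| = |hm u - hm w| := by ring_nf
        _ = 1 := this
    · rw [hbd w u h2 hu h1 (adj_symm' ha)]
      have := hhm.1 u hu w hw ha
      calc |hm u + 2 * (k:ℤ) - (hm w + 2 * (k:ℤ))| = |hm u - hm w| := by ring_nf
        _ = 1 := this
    · exact hhp.1 u hu w hw ha
  · intro u hu
    by_cases h1 : u ∈ Λ' <;> simp only [h1, if_true, if_false]
    · have := hhm.2 u hu; omega
    · exact hhp.2 u hu
  · rw [if_pos hvΛ', hpv]; ring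
  · rw [if_pos hvΛ', hmv]; ring
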